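/- Let Σ ⊆ ℝ³ be the union, over the integer lattice {1,...,n}³, of all open unit 2-dimensional faces (open squares) and all lattice vertices of the cubical grid. Then Σ is semialgebraic but not locally closed, and the complement ℝ³ \ Σ is path-connected. -/

import Mathlib

/-- Semialgebraic subsets of `ℝ^ι`: the smallest class containing the basic sets
`{x | p(x) < 0}` and `{x | p(x) = 0}` for real polynomials `p` and closed under
finite unions, finite intersections and complements. -/
inductive IsSemialgebraic {ι : Type} [Fintype ι] : Set (ι → ℝ) → Prop
  | lt (p : MvPolynomial ι ℝ) : IsSemialgebraic {x | MvPolynomial.eval x p < 0}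
  | eq (p : MvPolynomial ι ℝ) : IsSemialgebraic {x | MvPolynomial.eval x p = 0}
  | union {S T : Set (ι → ℝ)} : IsSemialgebraic S → IsSemialgebraic T →
      IsSemialgebraic (S ∪ T)
  | inter {S T : Set (ι → ℝ)} : IsSemialgebraic S → IsSemialgebraic T →
      IsSemialgebraic (S ∩ T)
  | compl {S : Set (ι → ℝ)} : IsSemialgebraic S → IsSemialgebraic Sᶜ

/-- `t` is an integer lattice coordinate in `{1, ..., n}`. -/
def IsLatticeCoord (n : ℕ) (t : ℝ) : Prop :=
  ∃ m : ℤ, 1 ≤ m ∧ m ≤ (n : ℤ) ∧ t = (m : ℝ)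

/-- `t` lies strictly between two consecutive integers of `{1, ..., n}`. -/
def IsOpenEdgeCoord (n : ℕ) (t : ℝ) : Prop :=
  ∃ m : ℤ, 1 ≤ m ∧ m + 1 ≤ (n : ℤ) ∧ (m : ℝ) < t ∧ t < (m : ℝ) + 1

/-- The union over the cubical grid on `{1,...,n}³` of all open 2-dimensional faces
and all lattice vertices. -/
def gridSigma (n : ℕ) : Set (Fin 3 → ℝ) :=
  {x | ∀ i, IsLatticeCoord n (x i)} ∪
    {x | ∃ i : Fin 3, IsLatticeCoord n (x i) ∧ ∀ j, j ≠ i → IsOpenEdgeCoord n (x j)}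

namespace SAaux

lemma sa_empty : IsSemialgebraic (∅ : Set (Fin 3 → ℝ)) := by
  have h := IsSemialgebraic.eq (ι := Fin 3) (1 : MvPolynomial (Fin 3) ℝ)
  have : {x : Fin 3 → ℝ | MvPolynomial.eval x (1 : MvPolynomial (Fin 3) ℝ) = 0} = ∅ := by
    ext x; simp
  rwa [this] at h

lemma sa_eq_coord (i : Fin 3) (c : ℝ) : IsSemialgebraic {x : Fin 3 → ℝ | x i = c} := by
  have h := IsSemialgebraic.eq (ι := Fin 3) (MvPolynomial.X i - MvPolynomial.C c)
  have : {x : Fin 3 → ℝ | MvPolynomial.eval x (MvPolynomial.X i - MvPolynomial.C c) = 0}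
      = {x : Fin 3 → ℝ | x i = c} := by
    ext x; simp [sub_eq_zero]
  rwa [this] at h

lemma sa_lt_coord (i : Fin 3) (c : ℝ) : IsSemialgebraic {x : Fin 3 → ℝ | x i < c} := by
  have h := IsSemialgebraic.lt (ι := Fin 3) (MvPolynomial.X i - MvPolynomial.C c)
  have : {x : Fin 3 → ℝ | MvPolynomial.eval x (MvPolynomial.X i - MvPolynomial.C c) < 0}
      = {x : Fin 3 → ℝ | x i < c} := by
    ext x; simp [sub_neg]
  rwa [this] at h

lemma sa_gt_coord (i : Fin 3) (c : ℝ) : IsSemialgebraic {x : Fin 3 → ℝ | c < x i} := by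
  have h := IsSemialgebraic.lt (ι := Fin 3) (MvPolynomial.C c - MvPolynomial.X i)
  have : {x : Fin 3 → ℝ | MvPolynomial.eval x (MvPolynomial.C c - MvPolynomial.X i) < 0}
      = {x : Fin 3 → ℝ | c < x i} := by
    ext x; simp [sub_neg]
  rwa [this] at h

lemma sa_biUnion (A : Finset ℤ) (f : ℤ → Set (Fin 3 → ℝ))
    (hf : ∀ m, IsSemialgebraic (f m)) : IsSemialgebraic (⋃ m ∈ A, f m) := by
  classical
  induction A using Finset.induction with
  | empty => simpa using sa_empty
  | insert _ _ hm ih =>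
      rw [Finset.set_biUnion_insert]
      exact IsSemialgebraic.union (hf _) ih

lemma sa_lattice (n : ℕ) (i : Fin 3) :
    IsSemialgebraic {x : Fin 3 → ℝ | IsLatticeCoord n (x i)} := by
  have : {x : Fin 3 → ℝ | IsLatticeCoord n (x i)}
      = ⋃ m ∈ Finset.Icc (1 : ℤ) (n : ℤ), {x : Fin 3 → ℝ | x i = (m : ℝ)} := by
    ext x
    simp [IsLatticeCoord, Finset.mem_Icc]
    tauto
  rw [this]
  exact sa_biUnion _ _ fun m => sa_eq_coord i _

lemma sa_openEdge (n : ℕ) (i : Fin 3) :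
    IsSemialgebraic {x : Fin 3 → ℝ | IsOpenEdgeCoord n (x i)} := by
  have : {x : Fin 3 → ℝ | IsOpenEdgeCoord n (x i)}
      = ⋃ m ∈ Finset.Icc (1 : ℤ) ((n : ℤ) - 1),
          ({x : Fin 3 → ℝ | (m : ℝ) < x i} ∩ {x : Fin 3 → ℝ | x i < (m : ℝ) + 1}) := by
    ext x
    simp only [Set.mem_setOf_eq, Set.mem_iUnion, Set.mem_inter_iff, Finset.mem_Icc,
      IsOpenEdgeCoord]
    constructor
    · rintro ⟨m, h1, h2, h3, h4⟩; exact ⟨m, ⟨h1, by omega⟩, h3, h4⟩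
    · rintro ⟨m, ⟨h1, h2⟩, h3, h4⟩; exact ⟨m, h1, by omega, h3, h4⟩
  rw [this]
  exact sa_biUnion _ _ fun m => IsSemialgebraic.inter (sa_gt_coord i _) (sa_lt_coord i _)

lemma sa_gridSigma (n : ℕ) : IsSemialgebraic (gridSigma n) := by
  have hV : {x : Fin 3 → ℝ | ∀ i, IsLatticeCoord n (x i)}
      = ({x : Fin 3 → ℝ | IsLatticeCoord n (x 0)} ∩ {x | IsLatticeCoord n (x 1)})
        ∩ {x | IsLatticeCoord n (x 2)} := by
    ext x
    constructor
    · intro h; exact ⟨⟨h 0, h 1⟩, h 2⟩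
    · rintro ⟨⟨h0, h1⟩, h2⟩ i
      fin_cases i <;> assumption
  have hF : {x : Fin 3 → ℝ | ∃ i : Fin 3, IsLatticeCoord n (x i) ∧
        ∀ j, j ≠ i → IsOpenEdgeCoord n (x j)}
      = (({x : Fin 3 → ℝ | IsLatticeCoord n (x 0)} ∩
            ({x | IsOpenEdgeCoord n (x 1)} ∩ {x | IsOpenEdgeCoord n (x 2)})) ∪
         ({x : Fin 3 → ℝ | IsLatticeCoord n (x 1)} ∩
            ({x | IsOpenEdgeCoord n (x 0)} ∩ {x | IsOpenEdgeCoord n (x 2)}))) ∪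
        ({x : Fin 3 → ℝ | IsLatticeCoord n (x 2)} ∩
            ({x | IsOpenEdgeCoord n (x 0)} ∩ {x | IsOpenEdgeCoord n (x 1)})) := by
    ext x
    constructor
    · rintro ⟨i, hL, hE⟩
      fin_cases i
      · exact Or.inl (Or.inl ⟨hL, hE 1 (by decide), hE 2 (by decide)⟩)
      · exact Or.inl (Or.inr ⟨hL, hE 0 (by decide), hE 2 (by decide)⟩)
      · exact Or.inr ⟨hL, hE 0 (by decide), hE 1 (by decide)⟩
    · rintro ((⟨hL, h1, h2⟩ | ⟨hL, h1, h2⟩) | ⟨hL, h1, h2⟩)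
      · exact ⟨0, hL, fun j hj => by fin_cases j <;> first | exact absurd rfl hj | assumption⟩
      · exact ⟨1, hL, fun j hj => by fin_cases j <;> first | exact absurd rfl hj | assumption⟩
      · exact ⟨2, hL, fun j hj => by fin_cases j <;> first | exact absurd rfl hj | assumption⟩
  unfold gridSigma
  rw [hV, hF]
  exact IsSemialgebraic.union
    (IsSemialgebraic.inter (IsSemialgebraic.inter (sa_lattice n 0) (sa_lattice n 1))
      (sa_lattice n 2))
    (IsSemialgebraic.union
      (IsSemialgebraic.union
        (IsSemialgebraic.inter (sa_lattice n 0)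
          (IsSemialgebraic.inter (sa_openEdge n 1) (sa_openEdge n 2)))
        (IsSemialgebraic.inter (sa_lattice n 1)
          (IsSemialgebraic.inter (sa_openEdge n 0) (sa_openEdge n 2))))
      (IsSemialgebraic.inter (sa_lattice n 2)
        (IsSemialgebraic.inter (sa_openEdge n 0) (sa_openEdge n 1))))

end SAaux

namespace Gaux

/-- fractional: strictly between consecutive integers -/
def Frac (t : ℝ) : Prop := ∃ m : ℤ, (m : ℝ) < t ∧ t < (m : ℝ) + 1

lemma frac_not_lattice {n : ℕ} {t : ℝ} (h : Frac t) : ¬ IsLatticeCoord n t := by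
  rintro ⟨m', _, _, rfl⟩
  obtain ⟨m, h1, h2⟩ := h
  have : m < m' := by exact_mod_cast h1
  have : m' < m + 1 := by exact_mod_cast h2
  omega

lemma int_not_openEdge {n : ℕ} {m' : ℤ} : ¬ IsOpenEdgeCoord n (m' : ℝ) := by
  rintro ⟨m, _, _, h3, h4⟩
  have : m < m' := by exact_mod_cast h3
  have : m' < m + 1 := by exact_mod_cast h4
  omega

lemma lattice_bounds {n : ℕ} {t : ℝ} (h : IsLatticeCoord n t) : 1 ≤ t ∧ t ≤ n := by
  obtain ⟨m, h1, h2, rfl⟩ := h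
  exact ⟨by exact_mod_cast h1, by exact_mod_cast h2⟩

lemma openEdge_bounds {n : ℕ} {t : ℝ} (h : IsOpenEdgeCoord n t) : 1 ≤ t ∧ t ≤ n := by
  obtain ⟨m, h1, h2, h3, h4⟩ := h
  constructor
  · have : (1 : ℝ) ≤ (m : ℝ) := by exact_mod_cast h1
    linarith
  · have : (m : ℝ) + 1 ≤ (n : ℝ) := by exact_mod_cast h2
    linarith

lemma sigma_bounds {n : ℕ} {x : Fin 3 → ℝ} (h : x ∈ gridSigma n) (i : Fin 3) :
    1 ≤ x i ∧ x i ≤ n := by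
  rcases h with h | ⟨j, hL, hE⟩
  · exact lattice_bounds (h i)
  · by_cases hij : i = j
    · subst hij; exact lattice_bounds hL
    · exact openEdge_bounds (hE i hij)

/-- all-fractional points avoid Σ -/
lemma frac_mem_compl {n : ℕ} {x : Fin 3 → ℝ} (h : ∀ i, Frac (x i)) :
    x ∈ (gridSigma n)ᶜ := by
  rintro (hall | ⟨i, hL, _⟩)
  · exact frac_not_lattice (h 0) (hall 0)
  · exact frac_not_lattice (h i) hL

lemma lt_one_mem_compl {n : ℕ} {x : Fin 3 → ℝ} (i : Fin 3) (h : x i < 1) :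
    x ∈ (gridSigma n)ᶜ := fun hx => absurd (sigma_bounds hx i).1 (not_le.mpr h)

/-- join two points by the straight segment, checking membership pointwise -/
lemma joined_of_seg {s : Set (Fin 3 → ℝ)} {x y : Fin 3 → ℝ}
    (h : ∀ t : ℝ, 0 ≤ t → t ≤ 1 → (fun i => (1 - t) * x i + t * y i) ∈ s) :
    JoinedIn s x y := by
  refine ⟨⟨⟨fun t => fun i => (1 - t.1) * x i + t.1 * y i, ?_⟩, ?_, ?_⟩, ?_⟩
  · exact continuous_pi fun i => by fun_prop
  · ext i; simp
  · ext i; simp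
  · intro t; exact h t.1 t.2.1 t.2.2



noncomputable def bpt : Fin 3 → ℝ := fun _ => 0

lemma frac_of_not_int {t : ℝ} (h : ∀ m : ℤ, t ≠ (m : ℝ)) : Frac t := by
  refine ⟨⌊t⌋, lt_of_le_of_ne (Int.floor_le t) (Ne.symm (h ⌊t⌋)), Int.lt_floor_add_one t⟩

lemma joined_B {n : ℕ} {x : Fin 3 → ℝ} (h : x 0 < 1) :
    JoinedIn (gridSigma n)ᶜ x bpt := by
  apply joined_of_seg
  intro t ht0 ht1
  apply lt_one_mem_compl 0
  show (1 - t) * x 0 + t * bpt 0 < 1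
  simp only [bpt]
  rcases le_or_gt (x 0) 0 with hx | hx
  · nlinarith
  · nlinarith

lemma joined_C {n : ℕ} (k : ℕ) : ∀ x : Fin 3 → ℝ, (∀ i, Frac (x i)) → x 0 < (k : ℝ) →
    JoinedIn (gridSigma n)ᶜ x bpt := by
  induction k with
  | zero =>
      intro x _ hx
      exact joined_B (by norm_num at hx ⊢; linarith)
  | succ k ih =>
      intro x hfrac hxk
      by_cases h1 : x 0 < 1
      · exact joined_B h1
      push_neg at h1
      obtain ⟨m1, hm1, hm1'⟩ := hfrac 0
      obtain ⟨m2, hm2, hm2'⟩ := hfrac 1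
      set e : Fin 3 → ℝ := fun j => if j = 0 then (m1 : ℝ) else if j = 1 then (m2 : ℝ) else x 2
        with he
      have he0 : e 0 = (m1 : ℝ) := rfl
      have he1 : e 1 = (m2 : ℝ) := rfl
      have he2 : e 2 = x 2 := rfl
      have hecompl : e ∈ (gridSigma n)ᶜ := by
        rintro (hall | ⟨i, hL, hE⟩)
        · exact frac_not_lattice (hfrac 2) (hall 2)
        · fin_cases i
          · exact int_not_openEdge (show IsOpenEdgeCoord n (m2 : ℝ) from hE 1 (by decide))
          · exact int_not_openEdge (show IsOpenEdgeCoord n (m1 : ℝ) from hE 0 (by decide))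
          · exact frac_not_lattice (hfrac 2) (show IsLatticeCoord n (x 2) from hL)
      have h1t : ∀ t : ℝ, 0 ≤ t → t < 1 → ((m1 : ℝ) < (1 - t) * x 0 + t * m1 ∧
          (1 - t) * x 0 + t * m1 < (m1 : ℝ) + 1) := by
        intro t ht0 htlt
        constructor
        · nlinarith [mul_pos (by linarith : (0:ℝ) < 1 - t) (by linarith : (0:ℝ) < x 0 - m1)]
        · nlinarith [mul_pos (by linarith : (0:ℝ) < 1 - t) (by linarith : (0:ℝ) < (m1:ℝ) + 1 - x 0)]
      have h2t : ∀ t : ℝ, 0 ≤ t → t < 1 → ((m2 : ℝ) < (1 - t) * x 1 + t * m2 ∧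
          (1 - t) * x 1 + t * m2 < (m2 : ℝ) + 1) := by
        intro t ht0 htlt
        constructor
        · nlinarith [mul_pos (by linarith : (0:ℝ) < 1 - t) (by linarith : (0:ℝ) < x 1 - m2)]
        · nlinarith [mul_pos (by linarith : (0:ℝ) < 1 - t) (by linarith : (0:ℝ) < (m2:ℝ) + 1 - x 1)]
      have seg1 : JoinedIn (gridSigma n)ᶜ x e := by
        apply joined_of_seg
        intro t ht0 ht1
        rcases eq_or_lt_of_le ht1 with rfl | htlt
        · have : (fun i => (1 - 1) * x i + 1 * e i) = e := by funext i; ring_nf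
          rw [this]; exact hecompl
        · apply frac_mem_compl
          intro i
          fin_cases i
          · show Frac ((1 - t) * x 0 + t * e 0)
            rw [he0]; exact ⟨m1, (h1t t ht0 htlt).1, (h1t t ht0 htlt).2⟩
          · show Frac ((1 - t) * x 1 + t * e 1)
            rw [he1]; exact ⟨m2, (h2t t ht0 htlt).1, (h2t t ht0 htlt).2⟩
          · show Frac ((1 - t) * x 2 + t * e 2)
            rw [he2, show (1 - t) * x 2 + t * x 2 = x 2 by ring]; exact hfrac 2
      set x' : Fin 3 → ℝ :=
        fun j => if j = 0 then (m1 : ℝ) - 1/2 else if j = 1 then (m2 : ℝ) - 1/2 else x 2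
        with hx'
      have hx'0 : x' 0 = (m1 : ℝ) - 1/2 := rfl
      have hx'1 : x' 1 = (m2 : ℝ) - 1/2 := rfl
      have hx'2 : x' 2 = x 2 := rfl
      have seg2 : JoinedIn (gridSigma n)ᶜ e x' := by
        apply joined_of_seg
        intro t ht0 ht1
        rcases eq_or_lt_of_le ht0 with rfl | htpos
        · have : (fun i => (1 - 0) * e i + 0 * x' i) = e := by funext i; ring_nf
          rw [this]; exact hecompl
        · apply frac_mem_compl
          intro i
          fin_cases i
          · show Frac ((1 - t) * e 0 + t * x' 0)
            rw [he0, hx'0]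
            exact ⟨m1 - 1, by push_cast; nlinarith, by push_cast; nlinarith⟩
          · show Frac ((1 - t) * e 1 + t * x' 1)
            rw [he1, hx'1]
            exact ⟨m2 - 1, by push_cast; nlinarith, by push_cast; nlinarith⟩
          · show Frac ((1 - t) * e 2 + t * x' 2)
            rw [he2, hx'2, show (1 - t) * x 2 + t * x 2 = x 2 by ring]; exact hfrac 2
      have hfrac' : ∀ i, Frac (x' i) := by
        intro i
        fin_cases i
        · show Frac (x' 0)
          rw [hx'0]; exact ⟨m1 - 1, by push_cast; norm_num, by push_cast; norm_num⟩
        · show Frac (x' 1)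
          rw [hx'1]; exact ⟨m2 - 1, by push_cast; norm_num, by push_cast; norm_num⟩
        · show Frac (x' 2)
          rw [hx'2]; exact hfrac 2
      have hbound : x' 0 < (k : ℝ) := by
        rw [hx'0]
        have hm1k : m1 ≤ (k : ℤ) := by
          have h' : (m1 : ℝ) < (k : ℝ) + 1 := by push_cast at hxk ⊢; linarith
          have : m1 < (k : ℤ) + 1 := by exact_mod_cast h'
          omega
        have : (m1 : ℝ) ≤ (k : ℝ) := by exact_mod_cast hm1k
        linarith
      exact (seg1.trans seg2).trans (ih x' hfrac' hbound)

lemma joined_all {n : ℕ} {x : Fin 3 → ℝ} (hx : x ∈ (gridSigma n)ᶜ) :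
    JoinedIn (gridSigma n)ᶜ x bpt := by
  classical
  set x' : Fin 3 → ℝ := fun i => if ∃ m : ℤ, x i = (m : ℝ) then x i - 1/2 else x i with hx'
  have key : ∀ i, ∀ t : ℝ, 0 < t → t ≤ 1 → Frac ((1 - t) * x i + t * x' i) := by
    intro i t ht0 ht1
    by_cases hi : ∃ m : ℤ, x i = (m : ℝ)
    · obtain ⟨m, hm⟩ := hi
      have hxi : x' i = x i - 1/2 := by simp [hx', hm]
      refine ⟨m - 1, ?_, ?_⟩ <;> rw [hxi, hm] <;> push_cast <;> nlinarith
    · have hxi : x' i = x i := by simp only [hx']; rw [if_neg hi]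
      rw [hxi, show (1 - t) * x i + t * x i = x i by ring]
      exact frac_of_not_int (by push_neg at hi; exact hi)
  have hfrac' : ∀ i, Frac (x' i) := by
    intro i
    have := key i 1 one_pos le_rfl
    simpa using this
  have seg : JoinedIn (gridSigma n)ᶜ x x' := by
    apply joined_of_seg
    intro t ht0 ht1
    rcases eq_or_lt_of_le ht0 with rfl | htpos
    · have : (fun i => (1 - 0) * x i + 0 * x' i) = x := by funext i; ring_nf
      rw [this]; exact hx
    · exact frac_mem_compl fun i => key i t htpos ht1
  have hb : x' 0 < ((⌈x' 0⌉₊ + 1 : ℕ) : ℝ) := by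
    push_cast
    have := Nat.le_ceil (x' 0)
    linarith
  exact seg.trans (joined_C _ x' hfrac' hb)

lemma pathconn (n : ℕ) : IsPathConnected (gridSigma n)ᶜ := by
  refine ⟨bpt, lt_one_mem_compl 0 (by norm_num [bpt]), ?_⟩
  intro y hy
  exact (joined_all hy).symm



lemma one_not_openEdge {n : ℕ} : ¬ IsOpenEdgeCoord n (1 : ℝ) := by
  have := int_not_openEdge (n := n) (m' := 1)
  simpa using this

lemma not_lc (n : ℕ) (hn : 2 ≤ n) : ¬ IsLocallyClosed (gridSigma n) := by
  rintro ⟨U, Z, hU, hZ, hUZ⟩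
  set v : Fin 3 → ℝ := fun _ => 1 with hv
  have hvS : v ∈ gridSigma n := Or.inl fun i => ⟨1, le_refl _, by omega, by norm_num⟩
  have hvU : v ∈ U := by rw [hUZ] at hvS; exact hvS.1
  obtain ⟨ε, hε, hball⟩ := Metric.isOpen_iff.mp hU v hvU
  set t : ℝ := min ε 1 / 2 with ht
  have ht0 : 0 < t := by positivity
  have htε : t < ε := by
    rcases min_le_left ε 1 with h
    rw [ht]; linarith [min_le_left ε 1]
  have ht1 : t < 1 := by rw [ht]; linarith [min_le_right ε 1]
  set ept : Fin 3 → ℝ := fun i => if i = 2 then 1 + t else 1 with hept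
  have hept0 : ept 0 = 1 := rfl
  have hept1 : ept 1 = 1 := rfl
  have hept2 : ept 2 = 1 + t := rfl
  have hfrac2 : Frac (ept 2) := ⟨1, by rw [hept2]; push_cast; constructor <;> linarith⟩
  have heU : ept ∈ U := by
    apply hball
    rw [Metric.mem_ball, dist_pi_lt_iff hε]
    intro i
    fin_cases i
    · show dist (ept 0) (v 0) < ε
      rw [hept0]; simpa [hv] using hε
    · show dist (ept 1) (v 1) < ε
      rw [hept1]; simpa [hv] using hε
    · show dist (ept 2) (v 2) < ε
      rw [hept2]
      have : dist (1 + t) (1 : ℝ) = t := by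
        rw [Real.dist_eq]; simp [abs_of_pos ht0]
      simp only [hv]
      rw [this]; exact htε
  have heS : ept ∉ gridSigma n := by
    rintro (hall | ⟨i, hL, hE⟩)
    · exact frac_not_lattice hfrac2 (hall 2)
    · fin_cases i
      · exact one_not_openEdge (show IsOpenEdgeCoord n (ept 1) from hE 1 (by decide))
      · exact one_not_openEdge (show IsOpenEdgeCoord n (ept 0) from hE 0 (by decide))
      · exact frac_not_lattice hfrac2 (show IsLatticeCoord n (ept 2) from hL)
  have heclos : ept ∈ closure (gridSigma n) := by
    apply mem_closure_iff_seq_limit.mpr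
    refine ⟨fun k => fun i => if i = 0 then 1 + 1 / ((k : ℝ) + 2) else ept i, ?_, ?_⟩
    · intro k
      have hk0 : (0 : ℝ) < 1 / ((k : ℝ) + 2) := by positivity
      have hk1 : 1 / ((k : ℝ) + 2) < 1 := by
        rw [div_lt_one (by positivity)]
        linarith [Nat.cast_nonneg (α := ℝ) k]
      refine Or.inr ⟨1, ⟨1, le_refl _, by omega, ?_⟩, ?_⟩
      · show (if (1 : Fin 3) = 0 then 1 + 1 / ((k : ℝ) + 2) else ept 1) = ((1 : ℤ) : ℝ)
        rw [if_neg (by decide), hept1]; norm_num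
      · intro j hj
        fin_cases j
        · show IsOpenEdgeCoord n (if (0 : Fin 3) = 0 then 1 + 1 / ((k : ℝ) + 2) else ept 0)
          rw [if_pos rfl]
          refine ⟨1, le_refl _, by omega, ?_, ?_⟩ <;> push_cast <;> linarith
        · exact absurd rfl hj
        · show IsOpenEdgeCoord n (if (2 : Fin 3) = 0 then 1 + 1 / ((k : ℝ) + 2) else ept 2)
          rw [if_neg (by decide), hept2]
          refine ⟨1, le_refl _, by omega, ?_, ?_⟩ <;> push_cast <;> linarith
    · rw [tendsto_pi_nhds]
      intro i
      by_cases hi : i = 0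
      · subst hi
        simp only [if_pos rfl]
        have h2 : Filter.Tendsto (fun k : ℕ => 1 / ((k : ℝ) + 2)) Filter.atTop (nhds 0) := by
          have := (tendsto_one_div_add_atTop_nhds_zero_nat (𝕜 := ℝ)).comp
            (Filter.tendsto_add_atTop_nat 1)
          convert this using 2 with k
          simp [Function.comp]
          ring
        have := h2.const_add (1 : ℝ)
        simpa [hept0] using this
      · simp only [if_neg hi]
        exact tendsto_const_nhds
  have heZ : ept ∈ Z := by
    have hsub : gridSigma n ⊆ Z := by rw [hUZ]; exact Set.inter_subset_right
    exact closure_minimal hsub hZ heclos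
  exact heS (by rw [hUZ]; exact ⟨heU, heZ⟩)

end Gaux

/-- For `n ≥ 2`, the union `Σ` of the open 2-faces and the vertices of the cubical
grid on `{1,...,n}³` is semialgebraic but not locally closed, and its complement
`ℝ³ \ Σ` is path-connected. -/
theorem stmt_11 (n : ℕ) (hn : 2 ≤ n) :
    IsSemialgebraic (gridSigma n) ∧ ¬ IsLocallyClosed (gridSigma n) ∧
      IsPathConnected (gridSigma n)ᶜ :=
  ⟨SAaux.sa_gridSigma n, Gaux.not_lc n hn, Gaux.pathconn n⟩
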